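/- arXiv:2507.15331 — 2 statements merged into one kernel-verified Lean document; each statement's English description precedes it below -/
import Mathlib

section
/- Expanding a network by adding one new node ν connected to an existing node k via a branch of admittance y₊ multiplies the common first-cofactor value of the admittance matrix by y₊: c(Y⁺) = y₊ · c(Y). In particular, if Y has rank n−1 and y₊ ≠ 0, then Y⁺ has rank n. -/
def cof1 {n : ℕ} {F : Type*} [CommRing F] (Y : Matrix (Fin (n + 1)) (Fin (n + 1)) F)
    (j k : Fin (n + 1)) : F :=
  (-1 : F) ^ (j.val + k.val) * (Y.submatrix j.succAbove k.succAbove).det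

/-- Index of `p` in the minor obtained by deleting index `j` (for `p ≠ j`). -/
def delIdx {n : ℕ} (j p : Fin (n + 2)) : Fin (n + 1) :=
  ⟨if j.val < p.val then p.val - 1 else min p.val n, by split <;> omega⟩

/-- The second cofactor `C_{ab,cd}(Y)`: rows `a, b` and columns `c, d` deleted, with the sign
`(-1)^(σ(a,b)+σ(c,d))`, realized recursively as `(-1)^(a+c)` times the first cofactor of the
`(a,c)` minor at the shifted indices; zero by convention when `a = b` or `c = d`. -/
def cof2 {n : ℕ} {F : Type*} [CommRing F] (Y : Matrix (Fin (n + 2)) (Fin (n + 2)) F)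
    (a b c d : Fin (n + 2)) : F :=
  if a = b ∨ c = d then 0 else
    (-1 : F) ^ (a.val + c.val) *
      cof1 (Y.submatrix a.succAbove c.succAbove) (delIdx a b) (delIdx c d)
/-- The admittance matrix of the network expanded by a new node `ν = n + 1` attached to the
existing node `k` through a branch of admittance `yp`. -/
def expandY {m : ℕ} (Y : Matrix (Fin (m + 1)) (Fin (m + 1)) ℝ) (k : Fin (m + 1)) (yp : ℝ) :
    Matrix (Fin (m + 2)) (Fin (m + 2)) ℝ :=
  fun i j =>
    if hi : i.val < m + 1 then
      if hj : j.val < m + 1 then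
        Y ⟨i.val, hi⟩ ⟨j.val, hj⟩ +
          (if (⟨i.val, hi⟩ : Fin (m + 1)) = k ∧ (⟨j.val, hj⟩ : Fin (m + 1)) = k then yp else 0)
      else if (⟨i.val, hi⟩ : Fin (m + 1)) = k then -yp else 0
    else
      if hj : j.val < m + 1 then
        (if (⟨j.val, hj⟩ : Fin (m + 1)) = k then -yp else 0)
      else yp

/-!
A matrix with zero row sums has zero determinant, since it kills the all-ones vector. Replacing
row `a` of such a matrix by `e_b - e_b'` keeps the row sums zero, so by linearity of the
determinant in that row the cofactors `(a, b)` and `(a, b')` agree; transposing, all first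
cofactors agree when the column sums vanish too. The expanded matrix again has zero row and column
sums, so its common cofactor can be read off at `(ν, ν)`, where the minor is `Y + y₊ E_kk` with
determinant `det Y + y₊ c(Y) = y₊ c(Y)`.

For the rank, the last row of `Y⁺ v = 0` reads `y₊ (v_ν - v_k) = 0`, and then the other rows say
that `v` restricted to the old nodes lies in `ker Y`, which is spanned by the all-ones vector when
`rank Y = n - 1`. Hence `ker Y⁺` is spanned by the all-ones vector as well.
-/
open Matrix

section Cofactor

variable {R : Type*} [CommRing R] {N : ℕ}

theorem mulVec_one_eq_zero_of_sum_row_eq_zero {ι : Type*} [Fintype ι] {A : Matrix ι ι R}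
    (hrow : ∀ i, ∑ j, A i j = 0) : A *ᵥ 1 = 0 := by
  ext i
  simpa [mulVec, dotProduct] using hrow i

theorem det_eq_zero_of_sum_row_eq_zero {ι : Type*} [Fintype ι] [DecidableEq ι] [Nonempty ι]
    {A : Matrix ι ι R} (hrow : ∀ i, ∑ j, A i j = 0) : A.det = 0 := by
  cases subsingleton_or_nontrivial R
  · exact Subsingleton.elim _ _
  exact det_eq_zero_of_mulVec_eq_zero_of_mem_nonZeroDivisors
    (mulVec_one_eq_zero_of_sum_row_eq_zero hrow) (i := Classical.arbitrary ι)
    (by simp [one_mem])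

theorem cof1_eq_det_updateRow (A : Matrix (Fin (N + 1)) (Fin (N + 1)) R) (a b : Fin (N + 1)) :
    cof1 A a b = (A.updateRow a (Pi.single b 1)).det := by
  rw [cof1, ← adjugate_apply, adjugate_fin_succ_eq_det_submatrix, add_comm]

theorem cof1_transpose (A : Matrix (Fin (N + 1)) (Fin (N + 1)) R) (a b : Fin (N + 1)) :
    cof1 Aᵀ b a = cof1 A a b := by
  rw [cof1, cof1, ← transpose_submatrix, det_transpose, add_comm]

theorem det_add_single (A : Matrix (Fin (N + 1)) (Fin (N + 1)) R) (a b : Fin (N + 1)) (r : R) :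
    (A + single a b r).det = A.det + r * cof1 A a b := by
  have hrow : A + single a b r = A.updateRow a (A a + r • Pi.single b 1) := by
    ext i j
    by_cases hi : i = a
    · subst hi
      by_cases hj : j = b
      · simp [hj]
      · simp [hj, Ne.symm hj]
    · simp [hi, Ne.symm hi]
  rw [hrow, det_updateRow_add, updateRow_eq_self, det_updateRow_smul, cof1_eq_det_updateRow]

theorem cof1_eq_of_sum_row_eq_zero (A : Matrix (Fin (N + 1)) (Fin (N + 1)) R)
    (hrow : ∀ i, ∑ j, A i j = 0) (a b b' : Fin (N + 1)) : cof1 A a b = cof1 A a b' := by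
  have hzero : (A.updateRow a (Pi.single b 1 - Pi.single b' 1)).det = 0 := by
    refine det_eq_zero_of_sum_row_eq_zero fun i => ?_
    by_cases hi : i = a
    · simp [hi]
    · simp [hi, hrow i]
  rw [cof1_eq_det_updateRow, cof1_eq_det_updateRow,
    ← sub_add_cancel (Pi.single b 1 : Fin (N + 1) → R) (Pi.single b' 1), det_updateRow_add, hzero,
    zero_add]

theorem cof1_eq_of_sum_eq_zero (A : Matrix (Fin (N + 1)) (Fin (N + 1)) R)
    (hrow : ∀ i, ∑ j, A i j = 0) (hcol : ∀ j, ∑ i, A i j = 0) (a b a' b' : Fin (N + 1)) :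
    cof1 A a b = cof1 A a' b' :=
  calc cof1 A a b = cof1 A a b' := cof1_eq_of_sum_row_eq_zero A hrow a b b'
    _ = cof1 Aᵀ b' a := (cof1_transpose A a b').symm
    _ = cof1 Aᵀ b' a' := cof1_eq_of_sum_row_eq_zero Aᵀ hcol b' a a'
    _ = cof1 A a' b' := cof1_transpose A a' b'

end Cofactor

theorem rank_add_one_eq_card_iff {K ι : Type*} [Field K] [Fintype ι] (A : Matrix ι ι K)
    {v : ι → K} (hv : v ≠ 0) (hAv : A *ᵥ v = 0) :
    A.rank + 1 = Fintype.card ι ↔ LinearMap.ker A.mulVecLin = K ∙ v := by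
  have hle : K ∙ v ≤ LinearMap.ker A.mulVecLin := by
    rwa [Submodule.span_singleton_le_iff_mem, LinearMap.mem_ker, mulVecLin_apply]
  have hdim := LinearMap.finrank_range_add_finrank_ker A.mulVecLin
  rw [Module.finrank_fintype_fun_eq_card] at hdim
  have hspan := finrank_span_singleton (K := K) hv
  change Module.finrank K (LinearMap.range A.mulVecLin) + 1 = _ ↔ _
  constructor
  · intro h
    exact (Submodule.eq_of_le_of_finrank_eq hle (by omega)).symm
  · intro h
    rw [h] at hdim
    omega

section Expand

variable {m : ℕ} (Y : Matrix (Fin (m + 1)) (Fin (m + 1)) ℝ) (k : Fin (m + 1)) (yp : ℝ)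

@[simp]
theorem expandY_castSucc_castSucc (i j : Fin (m + 1)) :
    expandY Y k yp i.castSucc j.castSucc = Y i j + if i = k ∧ j = k then yp else 0 := by
  simp [expandY, i.isLt, j.isLt]

@[simp]
theorem expandY_castSucc_last (i : Fin (m + 1)) :
    expandY Y k yp i.castSucc (Fin.last (m + 1)) = if i = k then -yp else 0 := by
  simp [expandY, i.isLt]

@[simp]
theorem expandY_last_castSucc (j : Fin (m + 1)) :
    expandY Y k yp (Fin.last (m + 1)) j.castSucc = if j = k then -yp else 0 := by
  simp [expandY, j.isLt]

@[simp]
theorem expandY_last_last : expandY Y k yp (Fin.last (m + 1)) (Fin.last (m + 1)) = yp := by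
  simp [expandY]

theorem transpose_expandY : (expandY Y k yp)ᵀ = expandY Yᵀ k yp := by
  ext i j
  induction i using Fin.lastCases <;> induction j using Fin.lastCases <;> simp [and_comm]

theorem sum_expandY_row_eq_zero (hrow : ∀ i, ∑ j, Y i j = 0) (i : Fin (m + 2)) :
    ∑ j, expandY Y k yp i j = 0 := by
  induction i using Fin.lastCases with
  | last => simp [Fin.sum_univ_castSucc]
  | cast i =>
    by_cases hik : i = k <;> simp [Fin.sum_univ_castSucc, Finset.sum_add_distrib, hrow, hik]

theorem submatrix_expandY_last :
    (expandY Y k yp).submatrix (Fin.last (m + 1)).succAbove (Fin.last (m + 1)).succAbove =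
      Y + single k k yp := by
  ext i j
  simp [single_apply, eq_comm]

theorem cof1_expandY_last :
    cof1 (expandY Y k yp) (Fin.last (m + 1)) (Fin.last (m + 1)) = Y.det + yp * cof1 Y k k := by
  rw [cof1, submatrix_expandY_last, det_add_single, Even.neg_one_pow ⟨_, rfl⟩, one_mul]

theorem mulVec_expandY_last (v : Fin (m + 2) → ℝ) :
    (expandY Y k yp *ᵥ v) (Fin.last (m + 1)) = yp * (v (Fin.last (m + 1)) - v k.castSucc) := by
  simp only [mulVec, dotProduct, Fin.sum_univ_castSucc, expandY_last_castSucc, ite_mul, neg_mul,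
    zero_mul, Finset.sum_ite_eq', Finset.mem_univ, ↓reduceIte, expandY_last_last]
  ring

theorem mulVec_expandY_castSucc (v : Fin (m + 2) → ℝ) (i : Fin (m + 1)) :
    (expandY Y k yp *ᵥ v) i.castSucc =
      (Y *ᵥ fun j => v j.castSucc) i + if i = k then yp * (v k.castSucc - v (Fin.last (m + 1)))
        else 0 := by
  by_cases hik : i = k
  · subst hik
    simp only [mulVec, dotProduct, Fin.sum_univ_castSucc, expandY_castSucc_castSucc, true_and,
      add_mul, ite_mul, zero_mul, Finset.sum_add_distrib, Finset.sum_ite_eq', Finset.mem_univ,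
      ↓reduceIte, expandY_castSucc_last, neg_mul]
    ring
  · simp [mulVec, dotProduct, Fin.sum_univ_castSucc, hik]

theorem ker_mulVecLin_expandY (hyp : yp ≠ 0) (hY : LinearMap.ker Y.mulVecLin = ℝ ∙ 1) :
    LinearMap.ker (expandY Y k yp).mulVecLin = ℝ ∙ 1 := by
  have hY1 : Y *ᵥ 1 = 0 := by
    simpa using (hY.ge (Submodule.mem_span_singleton_self 1))
  apply le_antisymm
  · intro v hv
    rw [LinearMap.mem_ker, mulVecLin_apply] at hv
    have hlast : v (Fin.last (m + 1)) = v k.castSucc := by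
      have h := congrFun hv (Fin.last (m + 1))
      rw [mulVec_expandY_last, Pi.zero_apply, mul_eq_zero] at h
      exact sub_eq_zero.1 (h.resolve_left hyp)
    have hYv : (fun j : Fin (m + 1) => v j.castSucc) ∈ ℝ ∙ 1 := by
      rw [← hY, LinearMap.mem_ker, mulVecLin_apply]
      ext i
      simpa [mulVec_expandY_castSucc, hlast] using congrFun hv i.castSucc
    obtain ⟨t, ht⟩ := Submodule.mem_span_singleton.1 hYv
    refine Submodule.mem_span_singleton.2 ⟨t, funext fun i => ?_⟩
    induction i using Fin.lastCases with
    | last => simpa [hlast] using congrFun ht k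
    | cast i => exact congrFun ht i
  · rw [Submodule.span_singleton_le_iff_mem, LinearMap.mem_ker, mulVecLin_apply]
    ext i
    induction i using Fin.lastCases <;>
      simp [mulVec_expandY_last, mulVec_expandY_castSucc, ← Pi.one_def, hY1]

end Expand

theorem expand_cofactor_general {n : ℕ}
    (Y : Matrix (Fin (n + 2)) (Fin (n + 2)) ℝ)
    (hrow : ∀ a, ∑ b, Y a b = 0) (hcol : ∀ b, ∑ a, Y a b = 0)
    (k : Fin (n + 2)) (yp : ℝ)
    (c : ℝ) (hc : ∀ a b, cof1 Y a b = c) :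
    (∀ a b : Fin (n + 3), cof1 (expandY (m := n + 1) Y k yp) a b = yp * c) ∧
      (Y.rank = n + 1 → yp ≠ 0 → (expandY (m := n + 1) Y k yp).rank = n + 2) := by
  set M := expandY (m := n + 1) Y k yp
  have hMrow : ∀ a, ∑ b, M a b = 0 := sum_expandY_row_eq_zero Y k yp hrow
  have hMcol : ∀ b, ∑ a, M a b = 0 := by
    simpa [M, ← transpose_expandY] using sum_expandY_row_eq_zero Yᵀ k yp hcol
  refine ⟨fun a b => ?_, fun hrank hyp => ?_⟩
  · rw [cof1_eq_of_sum_eq_zero M hMrow hMcol a b (Fin.last _) (Fin.last _), cof1_expandY_last,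
      det_eq_zero_of_sum_row_eq_zero hrow, hc, zero_add]
  · have hkerY := (rank_add_one_eq_card_iff Y one_ne_zero
      (mulVec_one_eq_zero_of_sum_row_eq_zero hrow)).1 (by simp [hrank])
    have hrankM := (rank_add_one_eq_card_iff M one_ne_zero
      (mulVec_one_eq_zero_of_sum_row_eq_zero hMrow)).2 (ker_mulVecLin_expandY Y k yp hyp hkerY)
    simp only [Fintype.card_fin] at hrankM
    omega

/-- Expanding a network by one new node joined to node `k` by a branch of admittance `yp`
multiplies the common first cofactor by `yp`; in particular if `Y` has maximal rank and
`yp ≠ 0` then the expanded matrix again has maximal rank. -/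
theorem expand_cofactor {n : ℕ}
    (Y : Matrix (Fin (n + 2)) (Fin (n + 2)) ℝ)
    (hsym : ∀ a b, Y a b = Y b a)
    (hrow : ∀ a, ∑ b, Y a b = 0) (hcol : ∀ b, ∑ a, Y a b = 0)
    (k : Fin (n + 2)) (yp : ℝ)
    (c : ℝ) (hc : ∀ a b, cof1 Y a b = c) :
    (∀ a b : Fin (n + 3), cof1 (expandY (m := n + 1) Y k yp) a b = yp * c) ∧
      (Y.rank = n + 1 → yp ≠ 0 → (expandY (m := n + 1) Y k yp).rank = n + 2) :=
  expand_cofactor_general Y hrow hcol k yp c hc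
end

section
/- For a connected network with nonnegative real branch admittances that remains connected after deleting zero-admittance branches, the driving-point impedances Z_{jk} define a metric on the node set: Z_{jj} = 0, Z_{jk} = Z_{kj} > 0 for j ≠ k, and Z_{pq} + Z_{qr} ≥ Z_{pr}; equality in the triangle inequality holds if and only if every path of positive-admittance branches from p to r passes through q. -/
/-- The weighted graph Laplacian (admittance matrix) of branch admittances `y`. -/
def lap {m : ℕ} (y : Fin m → Fin m → ℝ) : Matrix (Fin m) (Fin m) ℝ :=
  fun a b => if a = b then ∑ x, y a x else - y a b

/-!
Ground node `j`: since the network is connected, the reduced Laplacian is nonsingular and all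
cofactors of `Y` coincide, so Cramer's rule identifies `Z_{jk}` with `v k - v j = vᵀ Y v > 0`
for the potential `v` of a unit current entering at `k` and leaving at `j`.

For the triangle inequality let `v` carry a unit current from `r` to `q`. Reciprocity gives
`Z_{pq} + Z_{qr} - Z_{pr} = 2 (v p - v q)`, and by the minimum principle `v` is smallest at the
sink `q`. Equality means `v p = v q`. A path from `p` to `r` avoiding `q` would carry this
minimum to the source `r`, where it cannot be attained; conversely, if `q` separates `p` from
`r`, the maximum principle on the part of the network reachable from `p` without `q` gives
`v p ≤ v q`.
-/

open Matrix Finset SimpleGraph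

section Laplacian

variable {m : ℕ} {y : Fin m → Fin m → ℝ}

lemma lap_mulVec_apply (hdiag : ∀ a, y a a = 0) (v : Fin m → ℝ) (a : Fin m) :
    (lap y *ᵥ v) a = ∑ x, y a x * (v a - v x) := by
  have h : ∀ x, lap y a x * v x = (if a = x then (∑ z, y a z) * v a else 0) - y a x * v x := by
    intro x
    by_cases h : a = x
    · subst h; simp [lap, hdiag a]
    · simp [lap, h]
  simp only [mulVec, dotProduct, h, sum_sub_distrib, sum_ite_eq, mem_univ, if_true, mul_sub,
    sum_mul]

lemma lap_transpose (hsym : ∀ a b, y a b = y b a) : (lap y)ᵀ = lap y := by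
  ext a b
  by_cases h : a = b
  · subst h; rfl
  · simp [lap, h, Ne.symm h, hsym a b]

lemma lap_mulVec_const (hdiag : ∀ a, y a a = 0) (c : ℝ) : lap y *ᵥ (fun _ => c) = 0 := by
  ext a
  simp [lap_mulVec_apply hdiag]

lemma dotProduct_lap_mulVec_comm (hsym : ∀ a b, y a b = y b a) (v w : Fin m → ℝ) :
    v ⬝ᵥ (lap y *ᵥ w) = w ⬝ᵥ (lap y *ᵥ v) := by
  rw [dotProduct_mulVec, ← mulVec_transpose, lap_transpose hsym, dotProduct_comm]

lemma sum_lap_mulVec (hsym : ∀ a b, y a b = y b a) (hdiag : ∀ a, y a a = 0)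
    (v : Fin m → ℝ) : ∑ i, (lap y *ᵥ v) i = 0 := by
  have h := dotProduct_lap_mulVec_comm hsym (fun _ => 1) v
  rw [lap_mulVec_const hdiag, dotProduct_zero] at h
  simpa [dotProduct] using h

lemma two_mul_dotProduct_lap_mulVec (hsym : ∀ a b, y a b = y b a) (hdiag : ∀ a, y a a = 0)
    (v : Fin m → ℝ) :
    2 * (v ⬝ᵥ (lap y *ᵥ v)) = ∑ a, ∑ x, y a x * (v a - v x) ^ 2 := by
  have h₁ : v ⬝ᵥ (lap y *ᵥ v) = ∑ a, ∑ x, y a x * ((v a - v x) * v a) := by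
    simp only [dotProduct, lap_mulVec_apply hdiag, mul_sum]
    exact sum_congr rfl fun a _ => sum_congr rfl fun x _ => by ring
  have h₂ : v ⬝ᵥ (lap y *ᵥ v) = ∑ a, ∑ x, y a x * ((v x - v a) * v x) := by
    rw [h₁, sum_comm]
    exact sum_congr rfl fun a _ => sum_congr rfl fun x _ => by rw [hsym]
  nth_rw 1 [two_mul, h₁, h₂]
  rw [← sum_add_distrib]
  exact sum_congr rfl fun a _ => by rw [← sum_add_distrib]; exact sum_congr rfl fun x _ => by ring

lemma dotProduct_lap_mulVec_nonneg (hsym : ∀ a b, y a b = y b a) (hdiag : ∀ a, y a a = 0)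
    (hnn : ∀ a b, 0 ≤ y a b) (v : Fin m → ℝ) : 0 ≤ v ⬝ᵥ (lap y *ᵥ v) := by
  have h := two_mul_dotProduct_lap_mulVec hsym hdiag v
  have : 0 ≤ ∑ a, ∑ x, y a x * (v a - v x) ^ 2 :=
    sum_nonneg fun a _ => sum_nonneg fun x _ => mul_nonneg (hnn a x) (sq_nonneg _)
  linarith

lemma eq_of_dotProduct_lap_mulVec_eq_zero (hsym : ∀ a b, y a b = y b a)
    (hdiag : ∀ a, y a a = 0) (hnn : ∀ a b, 0 ≤ y a b) {v : Fin m → ℝ}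
    (hv : v ⬝ᵥ (lap y *ᵥ v) = 0) {a b : Fin m} (hab : 0 < y a b) : v a = v b := by
  have h := two_mul_dotProduct_lap_mulVec hsym hdiag v
  rw [hv, mul_zero, eq_comm, Fintype.sum_eq_zero_iff_of_nonneg fun a =>
    sum_nonneg fun x _ => mul_nonneg (hnn a x) (sq_nonneg _)] at h
  have ha := congrFun h a
  rw [Pi.zero_apply, Fintype.sum_eq_zero_iff_of_nonneg fun x =>
    mul_nonneg (hnn a x) (sq_nonneg _)] at ha
  have hb := congrFun ha b
  simp only [Pi.zero_apply, mul_eq_zero, hab.ne', false_or, sq_eq_zero_iff, sub_eq_zero] at hb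
  exact hb

end Laplacian

section MaximumPrinciple

variable {m : ℕ} {y : Fin m → Fin m → ℝ}

lemma mul_sub_nonpos_of_forall_le (hnn : ∀ a b, 0 ≤ y a b) {v : Fin m → ℝ} {a : Fin m}
    (hmin : ∀ x, 0 < y a x → v a ≤ v x) (x : Fin m) : y a x * (v a - v x) ≤ 0 := by
  rcases (hnn a x).eq_or_lt with h | h
  · rw [← h, zero_mul]
  · exact mul_nonpos_of_nonneg_of_nonpos h.le (sub_nonpos.2 (hmin x h))

lemma lap_mulVec_apply_nonpos (hdiag : ∀ a, y a a = 0) (hnn : ∀ a b, 0 ≤ y a b)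
    {v : Fin m → ℝ} {a : Fin m} (hmin : ∀ x, 0 < y a x → v a ≤ v x) :
    (lap y *ᵥ v) a ≤ 0 := by
  rw [lap_mulVec_apply hdiag]
  exact sum_nonpos fun x _ => mul_sub_nonpos_of_forall_le hnn hmin x

lemma eq_of_lap_mulVec_apply_nonneg (hdiag : ∀ a, y a a = 0) (hnn : ∀ a b, 0 ≤ y a b)
    {v : Fin m → ℝ} {a : Fin m} (hmin : ∀ x, 0 < y a x → v a ≤ v x)
    (ha : 0 ≤ (lap y *ᵥ v) a) {x : Fin m} (hx : 0 < y a x) : v x = v a := by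
  have hsum : ∑ z, y a z * (v a - v z) = 0 := by
    rw [← lap_mulVec_apply hdiag]; exact le_antisymm (lap_mulVec_apply_nonpos hdiag hnn hmin) ha
  have h := (sum_eq_zero_iff_of_nonpos fun z _ => mul_sub_nonpos_of_forall_le hnn hmin z).1
    hsum x (mem_univ x)
  rw [mul_eq_zero, sub_eq_zero] at h
  exact (h.resolve_left hx.ne').symm

lemma eq_of_lap_mulVec_apply_nonpos (hdiag : ∀ a, y a a = 0) (hnn : ∀ a b, 0 ≤ y a b)
    {v : Fin m → ℝ} {a : Fin m} (hmax : ∀ x, 0 < y a x → v x ≤ v a)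
    (ha : (lap y *ᵥ v) a ≤ 0) {x : Fin m} (hx : 0 < y a x) : v x = v a := by
  have := eq_of_lap_mulVec_apply_nonneg (v := -v) hdiag hnn (fun x hx => neg_le_neg (hmax x hx))
    (by rw [mulVec_neg, Pi.neg_apply]; exact neg_nonneg.2 ha) hx
  simpa using this

end MaximumPrinciple

lemma SimpleGraph.Walk.mem_of_forall_dart {V : Type*} {G : SimpleGraph V} {S : Set V}
    {u v : V} (p : G.Walk u v) (hu : u ∈ S) (hS : ∀ d ∈ p.darts, d.fst ∈ S → d.snd ∈ S) :
    v ∈ S := by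
  by_contra hv
  obtain ⟨d, hd, hfst, hsnd⟩ := p.exists_boundary_dart S hu hv
  exact hsnd (hS d hd hfst)

abbrev admittanceGraph {m : ℕ} (y : Fin m → Fin m → ℝ) : SimpleGraph (Fin m) :=
  SimpleGraph.fromRel fun u v => 0 < y u v

section Connected

variable {m : ℕ} {y : Fin m → Fin m → ℝ}

lemma admittanceGraph_adj (hsym : ∀ a b, y a b = y b a) (hdiag : ∀ a, y a a = 0) {a b : Fin m} :
    (admittanceGraph y).Adj a b ↔ 0 < y a b := by
  rw [fromRel_adj, hsym b a, or_self, and_iff_right_iff_imp]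
  rintro h rfl
  exact h.ne' (hdiag a)

lemma eq_of_dotProduct_lap_mulVec_eq_zero_of_connected (hsym : ∀ a b, y a b = y b a)
    (hdiag : ∀ a, y a a = 0) (hnn : ∀ a b, 0 ≤ y a b) (hconn : (admittanceGraph y).Connected)
    {v : Fin m → ℝ} (hv : v ⬝ᵥ (lap y *ᵥ v) = 0) (a b : Fin m) : v a = v b := by
  obtain ⟨w⟩ := hconn.preconnected a b
  exact w.mem_of_forall_dart (S := {i | v a = v i}) rfl fun d _ hd => hd.trans
    (eq_of_dotProduct_lap_mulVec_eq_zero hsym hdiag hnn hv ((admittanceGraph_adj hsym hdiag).1 d.adj))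

lemma eq_of_lap_mulVec_eq_zero (hsym : ∀ a b, y a b = y b a) (hdiag : ∀ a, y a a = 0)
    (hnn : ∀ a b, 0 ≤ y a b) (hconn : (admittanceGraph y).Connected) {v : Fin m → ℝ}
    (hv : lap y *ᵥ v = 0) (a b : Fin m) : v a = v b :=
  eq_of_dotProduct_lap_mulVec_eq_zero_of_connected hsym hdiag hnn hconn
    (by rw [hv, dotProduct_zero]) a b

end Connected

section Cofactors

variable {n : ℕ}

lemma cof1_eq_adjugate {R : Type*} [CommRing R] (Y : Matrix (Fin (n + 1)) (Fin (n + 1)) R)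
    (j k : Fin (n + 1)) : cof1 Y j k = adjugate Y k j := by
  rw [adjugate_fin_succ_eq_det_submatrix, cof1]

lemma succAbove_delIdx {j k : Fin (n + 2)} (h : k ≠ j) : j.succAbove (delIdx j k) = k := by
  have hne : j.val ≠ k.val := fun hv => h (Fin.ext hv.symm)
  apply Fin.ext
  simp only [Fin.succAbove, delIdx, Fin.lt_def, Fin.val_castSucc]
  split_ifs <;> simp_all <;> omega

lemma cof2_self_eq_adjugate {R : Type*} [CommRing R] (Y : Matrix (Fin (n + 2)) (Fin (n + 2)) R)
    {j k : Fin (n + 2)} (h : j ≠ k) :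
    cof2 Y j k j k = adjugate (Y.submatrix j.succAbove j.succAbove) (delIdx j k) (delIdx j k) := by
  rw [cof2, if_neg (by simp [h]), cof1_eq_adjugate, Even.neg_one_pow ⟨j.val, rfl⟩, one_mul]

lemma det_submatrix_succAbove_eq_adjugate {R : Type*} [CommRing R]
    (Y : Matrix (Fin (n + 1)) (Fin (n + 1)) R) (j : Fin (n + 1)) :
    (Y.submatrix j.succAbove j.succAbove).det = adjugate Y j j := by
  rw [adjugate_fin_succ_eq_det_submatrix, Even.neg_one_pow ⟨j.val, rfl⟩, one_mul]

lemma mulVec_insertNth_zero_succAbove {R : Type*} [CommRing R] {m : ℕ}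
    (A : Matrix (Fin (m + 1)) (Fin (m + 1)) R) (j : Fin (m + 1)) (x : Fin m → R) (a : Fin m) :
    (A *ᵥ j.insertNth 0 x) (j.succAbove a) = (A.submatrix j.succAbove j.succAbove *ᵥ x) a := by
  simp [mulVec, dotProduct, Fin.sum_univ_succAbove _ j]

lemma insertNth_zero_dotProduct_mulVec {R : Type*} [CommRing R] {m : ℕ}
    (A : Matrix (Fin (m + 1)) (Fin (m + 1)) R) (j : Fin (m + 1)) (x : Fin m → R) :
    j.insertNth 0 x ⬝ᵥ (A *ᵥ j.insertNth 0 x) =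
      x ⬝ᵥ (A.submatrix j.succAbove j.succAbove *ᵥ x) := by
  simp [dotProduct, Fin.sum_univ_succAbove _ j, mulVec_insertNth_zero_succAbove]

end Cofactors

section Adjugate

variable {n : ℕ} {y : Fin (n + 1) → Fin (n + 1) → ℝ}

lemma det_lap_eq_zero (hdiag : ∀ a, y a a = 0) : (lap y).det = 0 :=
  exists_mulVec_eq_zero_iff.1 ⟨fun _ => 1, fun h => one_ne_zero (congrFun h 0),
    lap_mulVec_const hdiag 1⟩

lemma eq_of_lap_mul_eq_zero (hsym : ∀ a b, y a b = y b a) (hdiag : ∀ a, y a a = 0)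
    (hnn : ∀ a b, 0 ≤ y a b) (hconn : (admittanceGraph y).Connected)
    {B : Matrix (Fin (n + 1)) (Fin (n + 1)) ℝ} (hB : lap y * B = 0) (i i' c : Fin (n + 1)) :
    B i c = B i' c := by
  have h : lap y *ᵥ B.col c = 0 := by rw [← mulVec_single_one, mulVec_mulVec, hB, zero_mulVec]
  exact eq_of_lap_mulVec_eq_zero hsym hdiag hnn hconn h i i'

/-- The rows and columns of the adjugate lie in the kernel of the Laplacian, which consists of
the constants. -/
lemma adjugate_lap_apply (hsym : ∀ a b, y a b = y b a) (hdiag : ∀ a, y a a = 0)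
    (hnn : ∀ a b, 0 ≤ y a b) (hconn : (admittanceGraph y).Connected) (i j i' j' : Fin (n + 1)) :
    adjugate (lap y) i j = adjugate (lap y) i' j' := by
  have hcol : lap y * adjugate (lap y) = 0 := by
    rw [mul_adjugate, det_lap_eq_zero hdiag, zero_smul]
  have hrow : lap y * (adjugate (lap y))ᵀ = 0 := by
    have h := congrArg transpose (adjugate_mul (lap y))
    rwa [transpose_mul, lap_transpose hsym, det_lap_eq_zero hdiag, zero_smul, transpose_zero] at h
  calc adjugate (lap y) i j = adjugate (lap y) i' j :=
        eq_of_lap_mul_eq_zero hsym hdiag hnn hconn hcol i i' j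
    _ = adjugate (lap y) i' j' := eq_of_lap_mul_eq_zero hsym hdiag hnn hconn hrow j j' i'

lemma det_submatrix_succAbove_lap_ne_zero (hsym : ∀ a b, y a b = y b a)
    (hdiag : ∀ a, y a a = 0) (hnn : ∀ a b, 0 ≤ y a b) (hconn : (admittanceGraph y).Connected)
    (j : Fin (n + 1)) : ((lap y).submatrix j.succAbove j.succAbove).det ≠ 0 := by
  intro hdet
  obtain ⟨x, hx0, hx⟩ := exists_mulVec_eq_zero_iff.2 hdet
  have hconst := eq_of_dotProduct_lap_mulVec_eq_zero_of_connected hsym hdiag hnn hconn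
    (by rw [insertNth_zero_dotProduct_mulVec, hx, dotProduct_zero]) (v := j.insertNth 0 x)
  refine hx0 (funext fun a => ?_)
  simpa using hconst (j.succAbove a) j

end Adjugate

lemma Fin.eq_of_sum_eq_of_forall_succAbove {M : Type*} [AddCommGroup M] {m : ℕ}
    {f g : Fin (m + 1) → M} (j : Fin (m + 1)) (hsum : ∑ i, f i = ∑ i, g i)
    (h : ∀ a, f (j.succAbove a) = g (j.succAbove a)) : f = g := by
  funext i
  obtain rfl | ⟨a, rfl⟩ := Fin.eq_self_or_eq_succAbove j i
  · rw [Fin.sum_univ_succAbove _ i, Fin.sum_univ_succAbove _ i, sum_congr rfl fun a _ => h a]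
      at hsum
    exact add_right_cancel hsum
  · exact h a

/-- The current vector injecting a unit current at node `k` and extracting it at node `j`. -/
def unitCurrent {m : ℕ} (j k : Fin m) : Fin m → ℝ := Pi.single k 1 - Pi.single j 1

section UnitCurrent

variable {m : ℕ}

lemma sum_unitCurrent (j k : Fin m) : ∑ i, unitCurrent j k i = 0 := by
  simp [unitCurrent, sum_sub_distrib]

lemma dotProduct_unitCurrent (w : Fin m → ℝ) (j k : Fin m) :
    w ⬝ᵥ unitCurrent j k = w k - w j := by
  rw [unitCurrent, dotProduct_sub, dotProduct_single_one, dotProduct_single_one]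

lemma unitCurrent_add_unitCurrent (p q r : Fin m) :
    unitCurrent p q + unitCurrent q r = unitCurrent p r := by
  simp only [unitCurrent]; abel

lemma neg_unitCurrent (j k : Fin m) : -unitCurrent j k = unitCurrent k j :=
  neg_sub _ _

lemma unitCurrent_apply_nonneg {j k i : Fin m} (h : i ≠ j) : 0 ≤ unitCurrent j k i := by
  simp only [unitCurrent, Pi.sub_apply, Pi.single_eq_of_ne h, sub_zero]
  rw [Pi.single_apply]
  split_ifs <;> norm_num

lemma unitCurrent_succAbove {n : ℕ} {j k : Fin (n + 2)} (h : j ≠ k) (a : Fin (n + 1)) :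
    unitCurrent j k (j.succAbove a) = (Pi.single (delIdx j k) 1 : Fin (n + 1) → ℝ) a := by
  rw [unitCurrent, Pi.sub_apply, Pi.single_eq_of_ne (Fin.succAbove_ne j a), sub_zero]
  conv_lhs => rw [← succAbove_delIdx h.symm]
  simp only [Pi.single_apply, Fin.succAbove_right_inj]

end UnitCurrent

/-- The driving-point impedance `Z_{jk} = C_{jk,jk}(Y) / c(Y)`, with `c(Y)` taken as the
`(0, 0)` cofactor. -/
noncomputable def resistance {n : ℕ} (y : Fin (n + 2) → Fin (n + 2) → ℝ)
    (j k : Fin (n + 2)) : ℝ :=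
  cof2 (lap y) j k j k / cof1 (lap y) 0 0

lemma resistance_self {n : ℕ} (y : Fin (n + 2) → Fin (n + 2) → ℝ) (j : Fin (n + 2)) :
    resistance y j j = 0 := by
  simp [resistance, cof2]

section Resistance

variable {n : ℕ} {y : Fin (n + 2) → Fin (n + 2) → ℝ}
  (hsym : ∀ a b, y a b = y b a) (hdiag : ∀ a, y a a = 0) (hnn : ∀ a b, 0 ≤ y a b)
  (hconn : (admittanceGraph y).Connected)
include hsym hdiag hnn hconn

/-- Grounding node `j`, the potential of node `k` under a unit current from `k` to `j` is the
`(k, k)` entry of the inverse of the reduced Laplacian, which is `Z_{jk}` by Cramer's rule. -/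
lemma exists_lap_mulVec_eq_unitCurrent (j k : Fin (n + 2)) :
    ∃ v, lap y *ᵥ v = unitCurrent j k ∧ resistance y j k = v k - v j := by
  rcases eq_or_ne j k with rfl | hjk
  · exact ⟨0, by simp [unitCurrent], by simp [resistance_self]⟩
  set M := (lap y).submatrix j.succAbove j.succAbove
  set d := delIdx j k
  have hM : M.det ≠ 0 := det_submatrix_succAbove_lap_ne_zero hsym hdiag hnn hconn j
  refine ⟨j.insertNth 0 (M⁻¹ *ᵥ Pi.single d 1),
    Fin.eq_of_sum_eq_of_forall_succAbove j ?_ fun a => ?_, ?_⟩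
  · rw [sum_lap_mulVec hsym hdiag, sum_unitCurrent]
  · rw [mulVec_insertNth_zero_succAbove, mulVec_mulVec, mul_nonsing_inv _ hM.isUnit,
      one_mulVec, unitCurrent_succAbove hjk]
  · have hk : (j.insertNth 0 (M⁻¹ *ᵥ Pi.single d 1) : Fin (n + 2) → ℝ) k = M⁻¹ d d := by
      conv_lhs => rw [← succAbove_delIdx hjk.symm]
      rw [Fin.insertNth_apply_succAbove, mulVec_single_one, col_apply]
    rw [hk, Fin.insertNth_apply_same, sub_zero, resistance, cof2_self_eq_adjugate _ hjk,
      cof1_eq_adjugate, adjugate_lap_apply hsym hdiag hnn hconn 0 0 j j,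
      ← det_submatrix_succAbove_eq_adjugate (lap y) j, Matrix.inv_def, Matrix.smul_apply,
      Ring.inverse_eq_inv', smul_eq_mul, div_eq_inv_mul]

lemma resistance_eq_sub {j k : Fin (n + 2)} {v : Fin (n + 2) → ℝ}
    (hv : lap y *ᵥ v = unitCurrent j k) : resistance y j k = v k - v j := by
  obtain ⟨w, hw, hres⟩ := exists_lap_mulVec_eq_unitCurrent hsym hdiag hnn hconn j k
  have h := eq_of_lap_mulVec_eq_zero hsym hdiag hnn hconn (v := v - w)
    (by rw [mulVec_sub, hv, hw, sub_self]) k j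
  simp only [Pi.sub_apply] at h
  linarith

lemma resistance_comm (j k : Fin (n + 2)) : resistance y j k = resistance y k j := by
  obtain ⟨v, hv, hres⟩ := exists_lap_mulVec_eq_unitCurrent hsym hdiag hnn hconn j k
  rw [hres, resistance_eq_sub hsym hdiag hnn hconn (v := -v)
    (by rw [mulVec_neg, hv, neg_unitCurrent])]
  simp only [Pi.neg_apply]
  ring

lemma resistance_pos {j k : Fin (n + 2)} (hjk : j ≠ k) : 0 < resistance y j k := by
  obtain ⟨v, hv, hres⟩ := exists_lap_mulVec_eq_unitCurrent hsym hdiag hnn hconn j k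
  have henergy : resistance y j k = v ⬝ᵥ (lap y *ᵥ v) := by
    rw [hres, hv, dotProduct_unitCurrent]
  refine henergy ▸ (dotProduct_lap_mulVec_nonneg hsym hdiag hnn v).lt_of_ne fun h => ?_
  have hconst := eq_of_dotProduct_lap_mulVec_eq_zero_of_connected hsym hdiag hnn hconn h.symm
  have hzero : lap y *ᵥ v = 0 := by
    rw [show v = fun _ => v j from funext fun i => hconst i j]
    exact lap_mulVec_const hdiag _
  have hk := congrFun (hv.symm.trans hzero) k
  simp [unitCurrent, hjk.symm] at hk

/-- Reciprocity turns the triangle defect into a potential difference. -/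
lemma resistance_add_resistance_sub (p : Fin (n + 2)) {q r : Fin (n + 2)} {v : Fin (n + 2) → ℝ}
    (hv : lap y *ᵥ v = unitCurrent q r) :
    resistance y p q + resistance y q r - resistance y p r = 2 * (v p - v q) := by
  obtain ⟨w, hw, hpq⟩ := exists_lap_mulVec_eq_unitCurrent hsym hdiag hnn hconn p q
  have hpr := resistance_eq_sub hsym hdiag hnn hconn (v := w + v)
    (by rw [mulVec_add, hw, hv, unitCurrent_add_unitCurrent])
  have hrec := dotProduct_lap_mulVec_comm hsym w v
  rw [hv, hw, dotProduct_unitCurrent, dotProduct_unitCurrent] at hrec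
  rw [hpq, resistance_eq_sub hsym hdiag hnn hconn hv, hpr, Pi.add_apply, Pi.add_apply]
  linarith

end Resistance

section Potential

variable {n : ℕ} {y : Fin (n + 2) → Fin (n + 2) → ℝ}
  (hsym : ∀ a b, y a b = y b a) (hdiag : ∀ a, y a a = 0) (hnn : ∀ a b, 0 ≤ y a b)
  {q r : Fin (n + 2)} {v : Fin (n + 2) → ℝ} (hv : lap y *ᵥ v = unitCurrent q r)
include hsym hdiag hnn hv

lemma eq_of_forall_le_of_lap_mulVec_eq_unitCurrent {i : Fin (n + 2)} (hmin : ∀ x, v i ≤ v x)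
    (hiq : i ≠ q) {x : Fin (n + 2)} (hx : (admittanceGraph y).Adj i x) : v x = v i :=
  eq_of_lap_mulVec_apply_nonneg hdiag hnn (fun x _ => hmin x)
    (hv ▸ unitCurrent_apply_nonneg hiq) ((admittanceGraph_adj hsym hdiag).1 hx)

lemma le_of_lap_mulVec_eq_unitCurrent (hconn : (admittanceGraph y).Connected) (i : Fin (n + 2)) :
    v q ≤ v i := by
  obtain ⟨i₀, hi₀⟩ := Finite.exists_min v
  suffices hq : v q = v i₀ from hq ▸ hi₀ i
  obtain ⟨w⟩ := hconn.preconnected i₀ q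
  by_contra hq
  refine hq (w.mem_of_forall_dart (S := {i | v i = v i₀}) rfl fun d _ hd => ?_)
  have hne : d.fst ≠ q := fun h => hq (h ▸ hd)
  exact (eq_of_forall_le_of_lap_mulVec_eq_unitCurrent hsym hdiag hnn hv (hd ▸ hi₀) hne
    d.adj).trans hd

lemma lt_of_lap_mulVec_eq_unitCurrent (hconn : (admittanceGraph y).Connected) {p : Fin (n + 2)}
    (w : (admittanceGraph y).Walk p r) (hq : q ∉ w.support) : v q < v p := by
  have hmin : ∀ i, v i = v q → ∀ x, v i ≤ v x := fun i hi x =>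
    hi ▸ le_of_lap_mulVec_eq_unitCurrent hsym hdiag hnn hv hconn x
  refine (le_of_lap_mulVec_eq_unitCurrent hsym hdiag hnn hv hconn p).lt_of_ne fun hpq => ?_
  have hr : v r = v q := w.mem_of_forall_dart (S := {i | v i = v q}) hpq.symm fun d hd hfst =>
    (eq_of_forall_le_of_lap_mulVec_eq_unitCurrent hsym hdiag hnn hv (hmin _ hfst)
      (fun h => hq (h ▸ w.dart_fst_mem_support_of_mem_darts hd)) d.adj).trans hfst
  have hqr : q ≠ r := fun h => hq (h ▸ w.end_mem_support)
  have hr_nonpos := lap_mulVec_apply_nonpos hdiag hnn fun x _ => hmin r hr x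
  norm_num [hv, unitCurrent, hqr] at hr_nonpos

end Potential

section Separation

variable {n : ℕ} {y : Fin (n + 2) → Fin (n + 2) → ℝ}
  (hsym : ∀ a b, y a b = y b a) (hdiag : ∀ a, y a a = 0) (hnn : ∀ a b, 0 ≤ y a b)
  (hconn : (admittanceGraph y).Connected)
  {q r : Fin (n + 2)} {v : Fin (n + 2) → ℝ} (hv : lap y *ᵥ v = unitCurrent q r)
include hsym hdiag hnn hconn hv

/-- If `q` separates `p` from `r`, then `v` is harmonic on the part `A` of the network reachable
from `p` avoiding `q`, whose only boundary node is `q`; so `max_A v ≤ v q`. -/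
lemma le_of_forall_walk_mem_support {p : Fin (n + 2)}
    (hcut : ∀ w : (admittanceGraph y).Walk p r, q ∈ w.support) : v p ≤ v q := by
  by_contra! hlt
  set A : Set (Fin (n + 2)) := {i | ∃ w : (admittanceGraph y).Walk p i, q ∉ w.support}
  have hpA : p ∈ A := ⟨.nil, by simpa using fun h : q = p => hlt.ne (congrArg v h)⟩
  have hqA : q ∉ A := fun ⟨w, hw⟩ => hw w.end_mem_support
  have hrA : r ∉ A := fun ⟨w, hw⟩ => hw (hcut w)
  have hA_adj : ∀ i ∈ A, ∀ x, (admittanceGraph y).Adj i x → x ≠ q → x ∈ A := by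
    rintro i ⟨w, hw⟩ x hx hxq
    exact ⟨w.concat hx, by simp [Walk.support_concat, hw, hxq.symm]⟩
  obtain ⟨i₀, hi₀A, hi₀⟩ := A.exists_max_image v A.toFinite ⟨p, hpA⟩
  have hq_lt : v q < v i₀ := hlt.trans_le (hi₀ p hpA)
  have hclosed : ∀ i ∈ A, v i = v i₀ →
      ∀ x, (admittanceGraph y).Adj i x → x ∈ A ∧ v x = v i₀ := by
    intro i hiA hi x hx
    have hiq : i ≠ q := fun h => hqA (h ▸ hiA)
    have hir : i ≠ r := fun h => hrA (h ▸ hiA)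
    have hmax : ∀ z, 0 < y i z → v z ≤ v i := fun z hz => by
      rcases eq_or_ne z q with rfl | hzq
      · exact hi ▸ hq_lt.le
      · exact hi ▸ hi₀ z (hA_adj i hiA z ((admittanceGraph_adj hsym hdiag).2 hz) hzq)
    have hxi := eq_of_lap_mulVec_apply_nonpos hdiag hnn hmax
      (by simp [hv, unitCurrent, hiq, hir]) ((admittanceGraph_adj hsym hdiag).1 hx)
    have hxq : x ≠ q := by rintro rfl; exact hq_lt.ne (hxi.trans hi)
    exact ⟨hA_adj i hiA x hx hxq, hxi.trans hi⟩
  obtain ⟨w⟩ := hconn.preconnected i₀ q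
  exact hqA (w.mem_of_forall_dart (S := {i | i ∈ A ∧ v i = v i₀}) ⟨hi₀A, rfl⟩
    fun d _ hd => hclosed _ hd.1 hd.2 _ d.adj).1

lemma eq_iff_forall_isPath_mem_support (p : Fin (n + 2)) :
    v p = v q ↔ ∀ w : (admittanceGraph y).Walk p r, w.IsPath → q ∈ w.support := by
  refine ⟨fun h w _ => ?_, fun h => ?_⟩
  · by_contra hq
    exact (lt_of_lap_mulVec_eq_unitCurrent hsym hdiag hnn hv hconn w hq).ne' h
  · refine le_antisymm ?_ (le_of_lap_mulVec_eq_unitCurrent hsym hdiag hnn hv hconn p)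
    exact le_of_forall_walk_mem_support hsym hdiag hnn hconn hv fun w =>
      w.support_bypass_subset_support (h _ w.bypass_isPath)

end Separation

/-- For a connected network with nonnegative real branch admittances whose positive-admittance
subgraph is connected, the driving-point impedances `Z_{jk} = C_{jk,jk}(Y)/c(Y)` define a
metric on the node set: `Z_{jj} = 0`, `Z_{jk} = Z_{kj} > 0` for `j ≠ k`, and
`Z_{pq} + Z_{qr} ≥ Z_{pr}`, with equality iff every path of positive-admittance branches
from `p` to `r` passes through `q`. -/
theorem resistance_distance_metric {n : ℕ}
    (y : Fin (n + 2) → Fin (n + 2) → ℝ)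
    (hsym : ∀ a b, y a b = y b a) (hdiag : ∀ a, y a a = 0) (hnn : ∀ a b, 0 ≤ y a b)
    (hconn : (SimpleGraph.fromRel fun u v => 0 < y u v).Connected) :
    let Y := lap y
    let Z : Fin (n + 2) → Fin (n + 2) → ℝ := fun j k => cof2 Y j k j k / cof1 Y 0 0
    (∀ j, Z j j = 0) ∧
    (∀ j k, Z j k = Z k j) ∧
    (∀ j k, j ≠ k → 0 < Z j k) ∧
    (∀ p q r, Z p r ≤ Z p q + Z q r) ∧
    (∀ p q r, Z p q + Z q r = Z p r ↔
      ∀ W : (SimpleGraph.fromRel fun u v => 0 < y u v).Walk p r,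
        W.IsPath → q ∈ W.support) := by
  intro Y Z
  refine ⟨resistance_self y, resistance_comm hsym hdiag hnn hconn,
    fun j k => resistance_pos hsym hdiag hnn hconn, fun p q r => ?_, fun p q r => ?_⟩
  · obtain ⟨v, hv, -⟩ := exists_lap_mulVec_eq_unitCurrent hsym hdiag hnn hconn q r
    have hdefect := resistance_add_resistance_sub hsym hdiag hnn hconn p hv
    have hmin := le_of_lap_mulVec_eq_unitCurrent hsym hdiag hnn hv hconn p
    show resistance y p r ≤ resistance y p q + resistance y q r
    linarith
  · obtain ⟨v, hv, -⟩ := exists_lap_mulVec_eq_unitCurrent hsym hdiag hnn hconn q r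
    have hdefect := resistance_add_resistance_sub hsym hdiag hnn hconn p hv
    refine Iff.trans ?_ (eq_iff_forall_isPath_mem_support hsym hdiag hnn hconn hv p)
    show resistance y p q + resistance y q r = resistance y p r ↔ v p = v q
    constructor <;> intro h <;> linarith
end
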